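/- arXiv:2502.13375 — 2 statements merged into one kernel-verified Lean document; each statement's English description precedes it below -/
import Mathlib

section
/- Let c be an equilibrium under the difference-seeking utility U_# on a finite simple graph G with minimum degree δ, and fix r with 0 ≤ r < δ. Let q be the number of types i ∈ Fin t for which there exists a vertex v with c(v) = i and U_#(c,v) = r (i.e., exactly r colorful edges are incident to v). Then (q − 1)·(δ − r) ≤ 2r; equivalently, q ≤ 2r/(δ − r) + 1. -/
open SimpleGraph Finset

/-- The coloring obtained from `c` by swapping the colors (agents) at `u` and `v`. -/
def swapColoring {V : Type*} [DecidableEq V] {t : ℕ} (c : V → Fin t) (u v : V) : V → Fin t :=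
  fun w => if w = u then c v else if w = v then c u else c w

/-- The binary utility `U_b`: 1 if some neighbor has a different type, 0 otherwise. -/
def Ub {V : Type*} [Fintype V] (G : SimpleGraph V) [DecidableRel G.Adj]
    {t : ℕ} (c : V → Fin t) (v : V) : ℕ :=
  if ∃ w ∈ G.neighborFinset v, c w ≠ c v then 1 else 0

/-- The difference-seeking utility `U_#`: the number of neighbors of a different type. -/
def Usharp {V : Type*} [Fintype V] (G : SimpleGraph V) [DecidableRel G.Adj]
    {t : ℕ} (c : V → Fin t) (v : V) : ℕ :=
  ((G.neighborFinset v).filter fun w => c w ≠ c v).card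

/-- `T_c(v)`: the set of types present in the neighborhood of `v`. -/
def typesIn {V : Type*} [Fintype V] (G : SimpleGraph V) [DecidableRel G.Adj]
    {t : ℕ} (c : V → Fin t) (v : V) : Finset (Fin t) :=
  (G.neighborFinset v).image c

/-- The variety-seeking utility `U_τ`: the number of types other than `c v` in the
neighborhood of `v`. -/
def Utau {V : Type*} [Fintype V] (G : SimpleGraph V) [DecidableRel G.Adj]
    {t : ℕ} (c : V → Fin t) (v : V) : ℕ :=
  ((typesIn G c v).erase (c v)).card

/-- The swap of `u` and `v` is improving under utility `U`. -/
def ImprovingSwap {V : Type*} [DecidableEq V] {t : ℕ}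
    (U : (V → Fin t) → V → ℕ) (c : V → Fin t) (u v : V) : Prop :=
  U c u < U (swapColoring c u v) v ∧ U c v < U (swapColoring c u v) u

/-- `c` is an equilibrium under the utility `U`: no improving swap exists. -/
def Equilibrium {V : Type*} [DecidableEq V] {t : ℕ}
    (U : (V → Fin t) → V → ℕ) (c : V → Fin t) : Prop :=
  ∀ u v : V, c u ≠ c v → ¬ ImprovingSwap U c u v

/-- The number of monochromatic edges of `c`. -/
def monoCount {V : Type*} [Fintype V] [DecidableEq V] (G : SimpleGraph V) [DecidableRel G.Adj]
    {t : ℕ} (c : V → Fin t) : ℕ :=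
  (G.edgeFinset.filter fun e => (e.map c).IsDiag).card

/-- The number of colorful edges of `c`. -/
def ceCount {V : Type*} [Fintype V] [DecidableEq V] (G : SimpleGraph V) [DecidableRel G.Adj]
    {t : ℕ} (c : V → Fin t) : ℕ :=
  (G.edgeFinset.filter fun e => ¬ (e.map c).IsDiag).card

/-- The cycle graph on `ZMod n`: `i` adjacent to `i + 1` and `i - 1`. -/
def cycleZMod (n : ℕ) : SimpleGraph (ZMod n) := SimpleGraph.circulantGraph {1}

instance (n : ℕ) : DecidableRel (cycleZMod n).Adj := fun a b =>
  decidable_of_iff (a ≠ b ∧ (a - b = 1 ∨ b - a = 1)) (by simp [cycleZMod])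

instance {α β : Type*} (G : SimpleGraph α) (H : SimpleGraph β)
    [DecidableRel G.Adj] [DecidableRel H.Adj] [DecidableEq α] [DecidableEq β] :
    DecidableRel (G □ H).Adj := fun x y =>
  decidable_of_iff (G.Adj x.1 y.1 ∧ x.2 = y.2 ∨ H.Adj x.2 y.2 ∧ x.1 = y.1)
    (SimpleGraph.boxProd_adj).symm

/-! For every type `i` counted by `q` pick a vertex `w i` of type `i` with `U_# = r`. If the
swap of `w i` and `w j` is not improving, then one of them, say `w i`, keeps at most `r`
colorful edges after taking the type `j`, so it has at least `δ - r` neighbours of type `j`.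
Orienting `i → j` in that case makes every pair of types an arc, giving at least `q (q - 1) / 2`
arcs, while `i` has at most `r / (δ - r)` out-neighbours, as the edges from `w i` to
neighbours of those types are colorful. Hence `q (q - 1) / 2 · (δ - r) ≤ q r`. -/

theorem card_mul_sub_one_le_two_mul_sum_card_of_total {α : Type*} [DecidableEq α]
    (s : Finset α) (R : α → α → Prop) [DecidableRel R]
    (htotal : ∀ i ∈ s, ∀ j ∈ s, i ≠ j → R i j ∨ R j i) :
    #s * (#s - 1) ≤ 2 * ∑ i ∈ s, #{j ∈ s | i ≠ j ∧ R i j} := by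
  have hdouble := sum_card_bipartiteAbove_eq_sum_card_bipartiteBelow
    (fun i j => i ≠ j ∧ R i j) (s := s) (t := s)
  simp only [bipartiteAbove, bipartiteBelow] at hdouble
  calc #s * (#s - 1) = ∑ i ∈ s, #(s.erase i) := by
        rw [sum_congr rfl fun i hi => card_erase_of_mem hi, sum_const, smul_eq_mul]
    _ ≤ ∑ i ∈ s, (#{j ∈ s | i ≠ j ∧ R i j} + #{j ∈ s | j ≠ i ∧ R j i}) := by
        refine sum_le_sum fun i hi => (card_le_card fun j hj => ?_).trans (card_union_le _ _)
        obtain ⟨hji, hj⟩ := mem_erase.1 hj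
        rcases htotal i hi j hj (Ne.symm hji) with h | h <;> simp [hj, hji, Ne.symm hji, h]
    _ = 2 * ∑ i ∈ s, #{j ∈ s | i ≠ j ∧ R i j} := by
        rw [sum_add_distrib, ← hdouble]; ring

theorem card_sub_one_mul_le_of_total {α : Type*} [DecidableEq α]
    (s : Finset α) (R : α → α → Prop) [DecidableRel R]
    (htotal : ∀ i ∈ s, ∀ j ∈ s, i ≠ j → R i j ∨ R j i) {d r : ℕ}
    (hout : ∀ i ∈ s, #{j ∈ s | i ≠ j ∧ R i j} * d ≤ r) :
    (#s - 1) * d ≤ 2 * r := by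
  rcases s.eq_empty_or_nonempty with rfl | hs
  · simp
  refine Nat.le_of_mul_le_mul_left ?_ hs.card_pos
  calc #s * ((#s - 1) * d) = (#s * (#s - 1)) * d := by ring
    _ ≤ (2 * ∑ i ∈ s, #{j ∈ s | i ≠ j ∧ R i j}) * d :=
        Nat.mul_le_mul_right d (card_mul_sub_one_le_two_mul_sum_card_of_total s R htotal)
    _ = 2 * ∑ i ∈ s, #{j ∈ s | i ≠ j ∧ R i j} * d := by rw [mul_assoc, sum_mul]
    _ ≤ 2 * ∑ _i ∈ s, r := Nat.mul_le_mul_left 2 (sum_le_sum hout)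
    _ = #s * (2 * r) := by rw [sum_const, smul_eq_mul]; ring

theorem swapColoring_comm {V : Type*} [DecidableEq V] {t : ℕ} (c : V → Fin t) (u v : V) :
    swapColoring c u v = swapColoring c v u := by
  funext w
  unfold swapColoring
  split_ifs <;> simp_all

section Usharp

variable {V : Type*} [Fintype V] (G : SimpleGraph V) [DecidableRel G.Adj] {t : ℕ}
  (c : V → Fin t)

def typeDegree (v : V) (j : Fin t) : ℕ := #{w ∈ G.neighborFinset v | c w = j}

theorem sum_typeDegree_le_usharp {v : V} {J : Finset (Fin t)} (hJ : c v ∉ J) :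
    ∑ j ∈ J, typeDegree G c v j ≤ Usharp G c v := by
  simp only [typeDegree]
  rw [sum_card_fiberwise_eq_card_filter]
  exact card_le_card <| monotone_filter_right _ fun _ _ hw h => hJ (h ▸ hw)

theorem card_mul_le_usharp {v : V} {J : Finset (Fin t)} (hJ : c v ∉ J) {d : ℕ}
    (hd : ∀ j ∈ J, d ≤ typeDegree G c v j) :
    #J * d ≤ Usharp G c v :=
  calc #J * d = ∑ _j ∈ J, d := by rw [sum_const, smul_eq_mul]
    _ ≤ ∑ j ∈ J, typeDegree G c v j := sum_le_sum hd
    _ ≤ Usharp G c v := sum_typeDegree_le_usharp G c hJ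

variable [DecidableEq V]

/-- After the swap `v` carries the type `c u`, and its neighbours of any other type still
differ from it. -/
theorem minDegree_sub_le_typeDegree_of_usharp_swap_le {u v : V} {r : ℕ}
    (h : Usharp G (swapColoring c u v) v ≤ r) :
    G.minDegree - r ≤ typeDegree G c v (c u) := by
  have hv : swapColoring c u v v = c u := by
    unfold swapColoring; split_ifs <;> simp_all
  have hother : #{w ∈ G.neighborFinset v | ¬c w = c u} ≤ r := by
    refine le_trans (card_le_card fun w hw => ?_) h
    obtain ⟨hadj, hwu⟩ := mem_filter.1 hw
    have hwv : w ≠ v := (G.ne_of_adj ((G.mem_neighborFinset v w).1 hadj)).symm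
    have hwu' : w ≠ u := fun h => hwu (h ▸ rfl)
    simp only [mem_filter, hv]
    simpa only [swapColoring, if_neg hwv, if_neg hwu'] using ⟨hadj, hwu⟩
  have hsplit := card_filter_add_card_filter_not (s := G.neighborFinset v) (fun w => c w = c u)
  have hdeg := G.minDegree_le_degree v
  rw [← card_neighborFinset_eq_degree] at hdeg
  rw [typeDegree]
  omega

theorem Equilibrium.minDegree_sub_le_typeDegree (heq : Equilibrium (Usharp G) c) {u v : V}
    (huv : c u ≠ c v) :
    G.minDegree - Usharp G c u ≤ typeDegree G c v (c u) ∨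
      G.minDegree - Usharp G c v ≤ typeDegree G c u (c v) := by
  rcases not_and_or.1 (heq u v huv) with h | h
  · exact Or.inl (minDegree_sub_le_typeDegree_of_usharp_swap_le G c (not_lt.1 h))
  · rw [swapColoring_comm] at h
    exact Or.inr (minDegree_sub_le_typeDegree_of_usharp_swap_le G c (not_lt.1 h))

end Usharp

theorem stmt3_general {V : Type*} [Fintype V] [DecidableEq V] (G : SimpleGraph V) [DecidableRel G.Adj]
    {t : ℕ} (c : V → Fin t) (heq : Equilibrium (Usharp G) c)
    (r : ℕ) :
    (((Finset.univ : Finset (Fin t)).filter fun i =>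
        ∃ v : V, c v = i ∧ Usharp G c v = r).card - 1) * (G.minDegree - r) ≤ 2 * r := by
  set Q := (Finset.univ : Finset (Fin t)).filter fun i => ∃ v : V, c v = i ∧ Usharp G c v = r
  have hwit : ∀ i ∈ Q, ∃ v, c v = i ∧ Usharp G c v = r := fun i hi => (mem_filter.1 hi).2
  rcases Q.eq_empty_or_nonempty with hQ | ⟨i₀, hi₀⟩
  · simp [hQ]
  obtain ⟨v₀, -⟩ := hwit i₀ hi₀
  have : Nonempty V := ⟨v₀⟩
  choose! w hwc hwr using hwit
  refine card_sub_one_mul_le_of_total Q (fun i j => G.minDegree - r ≤ typeDegree G c (w i) j)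
    (fun i hi j hj hij => ?_) (fun i hi => ?_)
  · have := heq.minDegree_sub_le_typeDegree G c (u := w j) (v := w i)
      (by rw [hwc i hi, hwc j hj]; exact hij.symm)
    rwa [hwc i hi, hwc j hj, hwr i hi, hwr j hj] at this
  · rw [← hwr i hi]
    refine card_mul_le_usharp G c ?_ fun j hj => (mem_filter.1 hj).2.2
    simp [hwc i hi]

theorem stmt3 {V : Type*} [Fintype V] [DecidableEq V] (G : SimpleGraph V) [DecidableRel G.Adj]
    {t : ℕ} (ht : 2 ≤ t) (c : V → Fin t) (heq : Equilibrium (Usharp G) c)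
    (r : ℕ) (hr : r < G.minDegree) :
    (((Finset.univ : Finset (Fin t)).filter fun i =>
        ∃ v : V, c v = i ∧ Usharp G c v = r).card - 1) * (G.minDegree - r) ≤ 2 * r :=
  stmt3_general G c heq r
end

section
/- Let G be a finite simple graph with minimum degree at least 1, let c be a coloring, and let c' be obtained from c by an improving swap under the binary utility U_b. Then the number of monochromatic edges of c' is at most the number of monochromatic edges of c minus 2. Consequently the swap game under U_b is a potential game with the number of monochromatic edges as potential. -/
open SimpleGraph Finset

/-!
An improving swap under `U_b` must raise both utilities from 0 to 1, so before the swap `u` and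
`v` sit inside monochromatic neighbourhoods of their own (different) colours. After the swap every
edge at `u` or `v` is colorful, while the other edges keep their colours. Hence no monochromatic
edge is created, and the edges `ua`, `vb` to any neighbours `a` of `u`, `b` of `v` (which exist by
the minimum-degree assumption) are two distinct monochromatic edges that are destroyed.
-/

section

variable {V : Type*} [Fintype V] [DecidableEq V] {G : SimpleGraph V} [DecidableRel G.Adj]
  {t : ℕ} {c : V → Fin t} {u v w x y : V}

section Swap

omit [Fintype V] [DecidableRel G.Adj]

@[simp]
theorem swapColoring_apply_left : swapColoring c u v u = c v := if_pos rfl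

@[simp]
theorem swapColoring_apply_right : swapColoring c u v v = c u := by
  by_cases h : v = u
  · subst h; exact if_pos rfl
  · simp [swapColoring, h]

theorem swapColoring_apply_of_ne (hu : w ≠ u) (hv : w ≠ v) : swapColoring c u v w = c w := by
  simp [swapColoring, hu, hv]

theorem swapColoring_comm_s8 (huv : u ≠ v) : swapColoring c u v = swapColoring c v u := by
  funext w
  by_cases hu : w = u
  · subst hu; simp
  by_cases hv : w = v
  · subst hv; simp
  rw [swapColoring_apply_of_ne hu hv, swapColoring_apply_of_ne hv hu]

theorem swapColoring_ne_of_adj_left (hu : ∀ w, G.Adj u w → c w = c u) (huv : c u ≠ c v)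
    (hw : G.Adj u w) : swapColoring c u v u ≠ swapColoring c u v w := by
  have hwv : w ≠ v := fun h => huv (h ▸ hu w hw).symm
  rw [swapColoring_apply_left, swapColoring_apply_of_ne hw.ne' hwv, hu w hw]
  exact huv.symm

theorem swapColoring_ne_of_adj_right (hv : ∀ w, G.Adj v w → c w = c v) (huv : c u ≠ c v)
    (hw : G.Adj v w) : swapColoring c u v v ≠ swapColoring c u v w := by
  rw [swapColoring_comm_s8 (ne_of_apply_ne c huv)]
  exact swapColoring_ne_of_adj_left hv (Ne.symm huv) hw

theorem eq_of_adj_of_swapColoring_eq (hu : ∀ w, G.Adj u w → c w = c u)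
    (hv : ∀ w, G.Adj v w → c w = c v) (huv : c u ≠ c v) (hxy : G.Adj x y)
    (h : swapColoring c u v x = swapColoring c u v y) : c x = c y := by
  by_cases hxu : x = u
  · subst hxu; exact absurd h (swapColoring_ne_of_adj_left hu huv hxy)
  by_cases hyu : y = u
  · subst hyu; exact absurd h.symm (swapColoring_ne_of_adj_left hu huv hxy.symm)
  by_cases hxv : x = v
  · subst hxv; exact absurd h (swapColoring_ne_of_adj_right hv huv hxy)
  by_cases hyv : y = v
  · subst hyv; exact absurd h.symm (swapColoring_ne_of_adj_right hv huv hxy.symm)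
  rwa [swapColoring_apply_of_ne hxu hxv, swapColoring_apply_of_ne hyu hyv] at h

end Swap

omit [DecidableEq V] in
theorem Ub_le_one : Ub G c v ≤ 1 := by
  unfold Ub; split <;> omega

omit [DecidableEq V] in
theorem Ub_eq_zero_iff : Ub G c v = 0 ↔ ∀ w, G.Adj v w → c w = c v := by
  simp [Ub]

theorem ImprovingSwap.Ub_left_eq_zero (h : ImprovingSwap (Ub G) c u v) : Ub G c u = 0 := by
  have := h.1; have : Ub G (swapColoring c u v) v ≤ 1 := Ub_le_one; omega

theorem ImprovingSwap.Ub_right_eq_zero (h : ImprovingSwap (Ub G) c u v) : Ub G c v = 0 := by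
  have := h.2; have : Ub G (swapColoring c u v) u ≤ 1 := Ub_le_one; omega

theorem monoCount_add_two_le {c' : V → Fin t}
    (hmono : ∀ x y, G.Adj x y → c' x = c' y → c x = c y) {e₁ e₂ : Sym2 V} (hne : e₁ ≠ e₂)
    (he₁ : e₁ ∈ G.edgeSet) (he₂ : e₂ ∈ G.edgeSet) (hc₁ : (e₁.map c).IsDiag)
    (hc₂ : (e₂.map c).IsDiag) (hc₁' : ¬ (e₁.map c').IsDiag) (hc₂' : ¬ (e₂.map c').IsDiag) :
    monoCount G c' + 2 ≤ monoCount G c := by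
  set M := G.edgeFinset.filter fun e => (e.map c).IsDiag
  set M' := G.edgeFinset.filter fun e => (e.map c').IsDiag
  have hsub : M' ⊆ M := by
    intro e
    induction e using Sym2.ind with
    | h x y => simpa [M, M'] using fun hxy h => ⟨hxy, hmono x y hxy h⟩
  have h₁ : e₁ ∉ insert e₂ M' := by simp [M', hne, hc₁']
  have h₂ : e₂ ∉ M' := by simp [M', hc₂']
  calc monoCount G c' + 2 = (insert e₁ (insert e₂ M')).card := by
        rw [card_insert_of_notMem h₁, card_insert_of_notMem h₂]; rfl
    _ ≤ monoCount G c := card_le_card <| insert_subset (by simp [he₁, hc₁]) <|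
        insert_subset (by simp [he₂, hc₂]) hsub

end

theorem stmt8_general {V : Type*} [Fintype V] [DecidableEq V] (G : SimpleGraph V) [DecidableRel G.Adj]
    {t : ℕ} (hδ : 1 ≤ G.minDegree) (c : V → Fin t)
    (u v : V) (huv : c u ≠ c v) (himp : ImprovingSwap (Ub G) c u v) :
    monoCount G (swapColoring c u v) + 2 ≤ monoCount G c := by
  have hu := Ub_eq_zero_iff.mp himp.Ub_left_eq_zero
  have hv := Ub_eq_zero_iff.mp himp.Ub_right_eq_zero
  obtain ⟨a, hua⟩ := (G.degree_pos_iff_exists_adj u).mp (hδ.trans (G.minDegree_le_degree u))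
  obtain ⟨b, hvb⟩ := (G.degree_pos_iff_exists_adj v).mp (hδ.trans (G.minDegree_le_degree v))
  have hub : u ≠ b := by rintro rfl; exact huv (hv _ hvb)
  refine monoCount_add_two_le (fun x y => eq_of_adj_of_swapColoring_eq hu hv huv)
    (e₁ := s(u, a)) (e₂ := s(v, b)) ?_ hua hvb ?_ ?_ ?_ ?_
  · simp [hub, ne_of_apply_ne c huv]
  · simpa using (hu a hua).symm
  · simpa using (hv b hvb).symm
  · simpa using swapColoring_ne_of_adj_left hu huv hua
  · simpa using swapColoring_ne_of_adj_right hv huv hvb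

theorem stmt8 {V : Type*} [Fintype V] [DecidableEq V] (G : SimpleGraph V) [DecidableRel G.Adj]
    {t : ℕ} (ht : 2 ≤ t) (hδ : 1 ≤ G.minDegree) (c : V → Fin t)
    (u v : V) (huv : c u ≠ c v) (himp : ImprovingSwap (Ub G) c u v) :
    monoCount G (swapColoring c u v) + 2 ≤ monoCount G c :=
  stmt8_general G hδ c u v huv himp
end
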